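/- arXiv:1711.01716 — 2 statements merged into one kernel-verified Lean document; each statement's English description precedes it below -/
import Mathlib

section
/- The restriction of a continuous ℤᵐ-periodic function to an affine n-plane is almost periodic in the sense of Bohr: if φ : ℝᵐ → ℝ is continuous and ℤᵐ-periodic and ℓ : ℝⁿ → ℝᵐ is an affine map, then f = φ ∘ ℓ has, for every δ > 0, a relatively dense set of δ-almost periods, i.e., there exists L > 0 such that every ball of radius L in ℝⁿ contains a vector a with sup_x |f(x + a) - f(x)| < δ. -/
/-- Uniform continuity of a continuous ℤᵐ-periodic function, in explicit ε-δ form. -/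
lemma periodic_uniform_cont (m : ℕ) (φ : (Fin m → ℝ) → ℝ) (hφ : Continuous φ)
    (hper : ∀ (y : Fin m → ℝ) (k : Fin m → ℤ), φ (y + fun i => (k i : ℝ)) = φ y)
    {δ : ℝ} (hδ : 0 < δ) :
    ∃ ε > (0:ℝ), ∀ u v : Fin m → ℝ, dist u v < ε → |φ u - φ v| < δ := by
  set K : Set (Fin m → ℝ) := Set.univ.pi fun _ => Set.Icc (-1 : ℝ) 2 with hK
  have hKc : IsCompact K := isCompact_univ_pi fun _ => isCompact_Icc
  have hUC : UniformContinuousOn φ K :=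
    hKc.uniformContinuousOn_of_continuous hφ.continuousOn
  obtain ⟨ε, hε, hε'⟩ := Metric.uniformContinuousOn_iff.mp hUC δ hδ
  refine ⟨min ε 1, lt_min hε one_pos, fun u v huv => ?_⟩
  set k : Fin m → ℤ := fun i => ⌊u i⌋ with hk
  set u' : Fin m → ℝ := u - fun i => (k i : ℝ) with hu'
  set v' : Fin m → ℝ := v - fun i => (k i : ℝ) with hv'
  have hu'eq : ∀ i, u' i = u i - (⌊u i⌋ : ℝ) := fun i => by
    rw [hu']; simp [hk]
  have hu'K : u' ∈ K := by
    intro i _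
    have h1 := Int.floor_le (u i)
    have h2 := Int.lt_floor_add_one (u i)
    constructor
    · rw [hu'eq]; linarith
    · rw [hu'eq]; linarith
  have hdist : ∀ i, dist (u i) (v i) < min ε 1 :=
    fun i => lt_of_le_of_lt (dist_le_pi_dist u v i) huv
  have hv'K : v' ∈ K := by
    intro i _
    have h2 : v' i = u' i + (v i - u i) := by
      rw [hu', hv']; simp
    have h3 : |v i - u i| < 1 := by
      have := hdist i
      rw [Real.dist_eq] at this
      rw [abs_sub_comm]
      exact lt_of_lt_of_le this (min_le_right _ _)
    have h4 := abs_lt.mp h3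
    have h5 := Int.floor_le (u i)
    have h6 := Int.lt_floor_add_one (u i)
    constructor
    · rw [h2, hu'eq]; linarith
    · rw [h2, hu'eq]; linarith
  have hdd : dist u' v' = dist u v := dist_sub_right u v _
  have hadd : ∀ w : Fin m → ℝ, (w - fun i => (k i : ℝ)) + (fun i => (k i : ℝ)) = w :=
    fun w => sub_add_cancel w _
  have hphi_u : φ u' = φ u :=
    calc φ u' = φ (u' + fun i => (k i : ℝ)) := (hper u' k).symm
      _ = φ u := by rw [hu', hadd]
  have hphi_v : φ v' = φ v :=
    calc φ v' = φ (v' + fun i => (k i : ℝ)) := (hper v' k).symm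
      _ = φ v := by rw [hv', hadd]
  have : dist (φ u') (φ v') < δ := by
    apply hε' u' hu'K v' hv'K
    rw [hdd]
    exact lt_of_lt_of_le huv (min_le_left _ _)
  rw [hphi_u, hphi_v, Real.dist_eq] at this
  exact this

/-- Relatively dense set of vectors `a` with `A a` within `ε` of an integer vector. -/
lemma dense_almost_integral (n m : ℕ) (A : (Fin n → ℝ) →ₗ[ℝ] (Fin m → ℝ))
    {ε : ℝ} (hε : 0 < ε) :
    ∃ L > (0:ℝ), ∀ x : Fin n → ℝ, ∃ a ∈ Metric.ball x L, ∃ k : Fin m → ℤ,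
      ∀ i, |A a i - (k i : ℝ)| < ε := by
  haveI : Fact ((0:ℝ) < 1) := ⟨one_pos⟩
  have hAc : Continuous A := A.continuous_of_finiteDimensional
  set g : (Fin n → ℝ) → (Fin m → UnitAddCircle) :=
    fun a i => ((A a i : ℝ) : UnitAddCircle) with hg
  have hgc : Continuous g :=
    continuous_pi fun i =>
      (AddCircle.continuous_mk' 1).comp ((continuous_apply i).comp hAc)
  have hgsub : ∀ x y, g (x - y) = g x - g y := by
    intro x y
    funext i
    simp [hg, map_sub]
  set H : Set (Fin m → UnitAddCircle) := closure (Set.range g) with hH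
  have hHc : IsCompact H := isClosed_closure.isCompact
  have hcover : H ⊆ ⋃ a : Fin n → ℝ, Metric.ball (g a) ε := by
    intro h hh
    obtain ⟨b, ⟨a, rfl⟩, hab⟩ := Metric.mem_closure_iff.mp hh ε hε
    exact Set.mem_iUnion.mpr ⟨a, by simpa [Metric.mem_ball, dist_comm] using hab⟩
  obtain ⟨t, ht⟩ := hHc.elim_finite_subcover _ (fun a => Metric.isOpen_ball) hcover
  refine ⟨1 + ∑ z ∈ t, ‖z‖, by positivity, fun x => ?_⟩
  have hx : g x ∈ H := subset_closure ⟨x, rfl⟩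
  obtain ⟨a, hat, hxa⟩ := Set.mem_iUnion₂.mp (ht hx)
  rw [Metric.mem_ball] at hxa
  refine ⟨x - a, ?_, fun i => round (A (x - a) i), fun i => ?_⟩
  · rw [Metric.mem_ball, dist_eq_norm]
    have h1 : ‖a‖ ≤ ∑ z ∈ t, ‖z‖ :=
      Finset.single_le_sum (f := fun z => ‖z‖) (fun _ _ => norm_nonneg _) hat
    calc ‖x - a - x‖ = ‖a‖ := by simp
      _ < 1 + ∑ z ∈ t, ‖z‖ := by linarith
  · have h1 : ‖g (x - a)‖ < ε := by
      rw [hgsub, ← dist_eq_norm]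
      exact hxa
    have h2 : ‖g (x - a) i‖ ≤ ‖g (x - a)‖ := norm_le_pi_norm _ i
    have h3 : ‖g (x - a) i‖ = |A (x - a) i - round (A (x - a) i)| := by
      rw [hg]
      exact UnitAddCircle.norm_eq
    rw [← h3]
    exact lt_of_le_of_lt h2 h1

/-- The restriction of a continuous ℤᵐ-periodic function to an affine n-plane
has a relatively dense set of δ-almost periods for every δ > 0. -/
theorem quasiperiodic_is_bohr_almost_periodic (n m : ℕ)
    (φ : (Fin m → ℝ) → ℝ) (hφ : Continuous φ)
    (hper : ∀ (y : Fin m → ℝ) (k : Fin m → ℤ), φ (y + fun i => (k i : ℝ)) = φ y)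
    (A : (Fin n → ℝ) →ₗ[ℝ] (Fin m → ℝ)) (b : Fin m → ℝ)
    (f : (Fin n → ℝ) → ℝ) (hf : ∀ x, f x = φ (A x + b)) :
    ∀ δ > (0:ℝ), ∃ L > (0:ℝ), ∀ x : Fin n → ℝ, ∃ a ∈ Metric.ball x L,
      ∀ y, |f (y + a) - f y| < δ := by
  intro δ hδ
  obtain ⟨ε, hε, hεUC⟩ := periodic_uniform_cont m φ hφ hper hδ
  obtain ⟨L, hL, hLd⟩ := dense_almost_integral n m A hε
  refine ⟨L, hL, fun x => ?_⟩
  obtain ⟨a, haL, k, hk⟩ := hLd x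
  refine ⟨a, haL, fun y => ?_⟩
  set u : Fin m → ℝ := A y + b with hu
  set v' : Fin m → ℝ := u + (A a - fun i => (k i : ℝ)) with hv'
  have h1 : f (y + a) = φ v' := by
    rw [hf, ← hper v' k]
    congr 1
    rw [hv', hu, map_add]
    funext i
    simp
    ring
  have h2 : f y = φ u := hf y
  have h3 : dist v' u < ε := by
    rw [dist_pi_lt_iff hε]
    intro i
    have : v' i - u i = A a i - (k i : ℝ) := by rw [hv']; simp
    rw [Real.dist_eq, this]
    exact hk i
  rw [h1, h2]
  exact hεUC v' u h3
end

section
/- For the translation ℤ-action x ↦ x + k on ℝ and a fixed irrational β, the coding sequence j : ℤ → {0,1} given by j(n) = 1 if {nβ} ∈ [0, 1/2) and j(n) = 0 otherwise (where {·} is the fractional part) is not eventually periodic. -/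
/-!
If the coding sequence were eventually periodic with period `p`, the points
`{(N + k p) β}`, `k ∈ ℕ`, would all lie in the same half of the circle. But they form a forward
orbit of the rotation by the irrational angle `p β`, and such an orbit is dense in the circle
(the closure of the ℕ-multiples of an element of a compact group is that of its ℤ-multiples),
so it meets both `(0, 1/2)` and `(1/2, 1)`.
-/

open Set

theorem Irrational.denseRange_add_nsmul_addCircle {γ : ℝ} (hγ : Irrational γ) (c : ℝ) :
    DenseRange fun k : ℕ => (c : UnitAddCircle) + k • (γ : UnitAddCircle) := by
  have hmultiples : DenseRange fun k : ℕ => k • (γ : UnitAddCircle) :=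
    denseRange_zsmul_iff_nsmul.mp (AddCircle.denseRange_zsmul_coe_iff.mpr (by simpa using hγ))
  exact (Homeomorph.addLeft (c : UnitAddCircle)).surjective.denseRange.comp hmultiples
    (Homeomorph.addLeft _).continuous

theorem Irrational.exists_fract_add_nat_mul_mem_Ioo {γ : ℝ} (hγ : Irrational γ) (c : ℝ)
    {a b : ℝ} (ha : 0 ≤ a) (hab : a < b) (hb : b ≤ 1) :
    ∃ k : ℕ, Int.fract (c + k * γ) ∈ Ioo a b := by
  obtain ⟨k, u, hu, hku⟩ := (hγ.denseRange_add_nsmul_addCircle c).exists_mem_open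
    (QuotientAddGroup.isOpenMap_coe _ isOpen_Ioo) (image_nonempty.mpr (nonempty_Ioo.mpr hab))
  refine ⟨k, ?_⟩
  have hfract : Int.fract (c + k * γ) = u := by
    rw [← AddCircle.coe_eq_coe_iff_of_mem_Ico (p := (1 : ℝ)) (a := 0)
      ⟨Int.fract_nonneg _, by simpa using Int.fract_lt_one _⟩
      ⟨ha.trans hu.1.le, by linarith [hu.2]⟩]
    simp [hku, ← nsmul_eq_mul]
  exact hfract ▸ hu

theorem eq_of_eventually_periodic_nat_mul {α : Type*} {f : ℤ → α} {N p : ℤ} (hp : 0 ≤ p)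
    (hf : ∀ n ≥ N, f (n + p) = f n) (k : ℕ) : f (N + k * p) = f N := by
  induction k with
  | zero => simp
  | succ k ih =>
    have hN : N ≤ N + k * p := le_add_of_nonneg_right (mul_nonneg k.cast_nonneg hp)
    rw [Nat.cast_succ, add_one_mul, ← add_assoc, hf _ hN, ih]

/-- For irrational β, the coding sequence of the orbit nβ mod 1 with respect to
the partition [0,1/2) ∪ [1/2,1) of the circle is not eventually periodic. -/
theorem coding_sequence_not_eventually_periodic (β : ℝ) (hβ : Irrational β)
    (j : ℤ → ℕ)
    (hj : ∀ n : ℤ, j n = if Int.fract ((n : ℝ) * β) < 1 / 2 then 1 else 0) :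
    ¬ ∃ (N : ℤ) (p : ℤ), 0 < p ∧ ∀ n ≥ N, j (n + p) = j n := by
  rintro ⟨N, p, hp, hper⟩
  have hγ : Irrational (p * β) := hβ.intCast_mul hp.ne'
  have hcode : ∀ k : ℕ, j N = if Int.fract (N * β + k * (p * β)) < 1 / 2 then 1 else 0 := by
    intro k
    rw [← eq_of_eventually_periodic_nat_mul hp.le hper k, hj]
    push_cast
    ring_nf
  obtain ⟨k₁, hk₁⟩ :=
    hγ.exists_fract_add_nat_mul_mem_Ioo (N * β) le_rfl one_half_pos one_half_lt_one.le
  obtain ⟨k₂, hk₂⟩ :=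
    hγ.exists_fract_add_nat_mul_mem_Ioo (N * β) one_half_pos.le one_half_lt_one le_rfl
  have h₁ := hcode k₁
  have h₂ := hcode k₂
  rw [if_pos hk₁.2] at h₁
  rw [if_neg (not_lt.mpr hk₂.1.le)] at h₂
  omega
end
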